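/- arXiv:2201.05417 — 2 statements merged into one kernel-verified Lean document; each statement's English description precedes it below -/
import Mathlib

section
/- Let (N, g̃) be a pseudo-Riemannian manifold carrying a concurrent vector field V, M a pseudo-Riemannian submanifold of N, and V^T the tangential component of V along M. Then for every vector field X tangent to M, g(V^T, X) = X((1/2) g̃(V, V)); hence V^T = ∇f on M for the smooth function f = (1/2) g̃(V, V). In particular any conformal soliton (M, g, V^T, φ) is a conformal gradient soliton. -/
/-!
STATEMENT 6.  Let `(N, g̃)` be a pseudo-Riemannian manifold carrying a concurrent vector
field `V` (`∇̃_X V = X`), `M` a pseudo-Riemannian submanifold of `N`, and `V^T` the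
tangential component of `V` along `M`.  Then for every vector field `X` tangent to `M`,
`g(V^T, X) = X((1/2) g̃(V, V))`; hence `V^T = ∇f` on `M` for the smooth function
`f = (1/2) g̃(V, V)` (the gradient being characterized by `g(∇f, X) = X f`).  In
particular any conformal soliton `(M, g, V^T, φ)` is a conformal gradient soliton.

The submanifold geometry is presented through: the points `M`, the module `VFM` of
tangent vector fields, the module `W` of ambient vector fields along `M`, the inclusion
`incl : VFM →ₗ[ℝ] W`, the ambient metric `gN` along `M` (induced metric
`g X Y = gN (incl X) (incl Y)`), the derivative `D` of functions, the ambient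
Levi-Civita connection `nablaN` along tangent directions, and the gradient operator
`grad` of the induced metric; the usual axioms are recorded as hypotheses.
-/
theorem tangent_part_of_concurrent_is_gradient
    {M : Type*} {VFM W : Type*}
    [AddCommGroup VFM] [Module ℝ VFM] [AddCommGroup W] [Module ℝ W]
    (incl : VFM →ₗ[ℝ] W)
    (gN : W → W → M → ℝ)
    (D : VFM → (M → ℝ) → (M → ℝ))
    (hD_smul : ∀ (X : VFM) (c : ℝ) (f : M → ℝ), D X (c • f) = c • D X f)
    (nablaN : VFM → W → W)
    -- the ambient metric is symmetric and ℝ-bilinear, and the induced metric is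
    -- nondegenerate on tangent vector fields
    (hgN_symm : ∀ X Y, gN X Y = gN Y X)
    (hgN_addl : ∀ X Y Z, gN (X + Y) Z = gN X Z + gN Y Z)
    (hgN_smull : ∀ (c : ℝ) (X Y), gN (c • X) Y = c • gN X Y)
    (hg_nd : ∀ w : VFM, (∀ X : VFM, gN (incl w) (incl X) = 0) → w = 0)
    -- metric compatibility of the ambient connection
    (h_compat : ∀ (X : VFM) (Y Z : W), D X (gN Y Z) = gN (nablaN X Y) Z + gN Y (nablaN X Z))
    -- the gradient of the induced metric, characterized by `g(grad f, X) = X f`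
    (grad : (M → ℝ) → VFM)
    (h_grad : ∀ (f : M → ℝ) (X : VFM), gN (incl (grad f)) (incl X) = D X f)
    -- the concurrent vector field `V` of `N`, with tangent part `V^T`
    -- and normal part `V^⊥` along `M`
    (V : W) (VT : VFM) (Vperp : W)
    (h_decomp : V = incl VT + Vperp)
    (h_perp : ∀ Z : VFM, gN Vperp (incl Z) = 0)
    (h_conc : ∀ X : VFM, nablaN X V = incl X) :
    -- conclusion: `g(V^T, X) = X((1/2) g̃(V,V))` for every tangent `X`, and
    -- `V^T = ∇f` for `f = (1/2) g̃(V, V)`; in particular any conformal soliton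
    -- `(M, g, V^T, φ)` is a conformal gradient soliton
    (∀ X : VFM, gN (incl VT) (incl X) = D X (fun p => gN V V p / 2)) ∧
      VT = grad (fun p => gN V V p / 2) := by
  have hf : (fun p => gN V V p / 2) = (2⁻¹ : ℝ) • gN V V := by
    funext p; simp [div_eq_inv_mul, mul_comm]
  have key : ∀ X : VFM, gN (incl VT) (incl X) = D X (fun p => gN V V p / 2) := by
    intro X
    have h1 : D X (gN V V) = 2 • gN (incl X) V := by
      rw [h_compat X V V, h_conc, hgN_symm V (incl X), two_smul]
    rw [hf, hD_smul, h1]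
    have h2 : gN (incl VT) (incl X) = gN V (incl X) := by
      rw [h_decomp, hgN_addl, h_perp, add_zero]
    rw [h2, hgN_symm]
    funext p
    simp [Pi.smul_apply, smul_eq_mul]
  refine ⟨key, ?_⟩
  have : VT - grad (fun p => gN V V p / 2) = 0 := by
    apply hg_nd
    intro X
    have hsub : incl (VT - grad (fun p => gN V V p / 2))
        = incl VT + (-1 : ℝ) • incl (grad (fun p => gN V V p / 2)) := by
      rw [map_sub]; module
    rw [hsub, hgN_addl, hgN_smull, key X, h_grad]
    simp
  exact sub_eq_zero.mp this
end

section
/- Let (N, g̃) be a pseudo-Riemannian manifold carrying a concurrent vector field V and let M be a pseudo-Riemannian submanifold of N. If (M, g, V^T, φ) is a conformal soliton and M is minimal in N (i.e. its mean curvature vector H vanishes identically), then φ ≡ 1. -/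
/-!
STATEMENT 7.  Let `(N, g̃)` be a pseudo-Riemannian manifold carrying a concurrent vector
field `V` (`∇̃_X V = X`) and let `M` be an `n`-dimensional pseudo-Riemannian submanifold
of `N`.  If `(M, g, V^T, φ)` is a conformal soliton and `M` is minimal in `N` (its mean
curvature vector `H = (1/n) Σ_i ε_i h(e_i, e_i)` vanishes identically), then `φ ≡ 1`.

The submanifold geometry is presented through: the points `M`, the module `VFM` of
tangent vector fields, the module `W` of ambient vector fields along `M`, the inclusion
`incl : VFM →ₗ[ℝ] W`, the ambient metric `gN` (induced metric
`g X Y = gN (incl X) (incl Y)`), the derivative `D` of functions, the Lie bracket and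
Levi-Civita connection `nabla` of `M`, the ambient connection `nablaN`, the second
fundamental form `h2`, the shape operator `A`, an orthonormal frame `e` with signs `ε`,
and the mean curvature vector `H`; the usual axioms are recorded as hypotheses.
-/
theorem conformal_soliton_minimal_phi_eq_one
    {M : Type*} {VFM W : Type*}
    [AddCommGroup VFM] [Module ℝ VFM] [AddCommGroup W] [Module ℝ W]
    (incl : VFM →ₗ[ℝ] W)
    (gN : W → W → M → ℝ)
    (D : VFM → (M → ℝ) → (M → ℝ))
    (bracket : VFM → VFM → VFM)
    (nablaN : VFM → W → W)
    (nabla : VFM → VFM → VFM)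
    (h2 : VFM → VFM → W)
    (A : W → VFM → VFM)
    -- the ambient metric is symmetric and ℝ-bilinear
    (hgN_symm : ∀ X Y, gN X Y = gN Y X)
    (hgN_addl : ∀ X Y Z, gN (X + Y) Z = gN X Z + gN Y Z)
    (hgN_smull : ∀ (c : ℝ) (X Y), gN (c • X) Y = c • gN X Y)
    -- metric compatibility of the ambient connection
    (h_compat : ∀ (X : VFM) (Y Z : W), D X (gN Y Z) = gN (nablaN X Y) Z + gN Y (nablaN X Z))
    -- torsion-freeness of the induced connection
    (h_torsion : ∀ X Y : VFM, nabla X Y - nabla Y X = bracket X Y)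
    -- Gauss formula, with `h(X, Y)` normal
    (h_gauss : ∀ X Y : VFM, nablaN X (incl Y) = incl (nabla X Y) + h2 X Y)
    (h_normal : ∀ X Y Z : VFM, gN (h2 X Y) (incl Z) = 0)
    -- shape operator: `g(A_η X, Y) = g̃(h(X, Y), η)`
    (h_shape : ∀ (η : W) (X Y : VFM), gN (incl (A η X)) (incl Y) = gN (h2 X Y) η)
    -- Weingarten: the tangent part of `∇̃_X η` is `-A_η X` for normal `η`
    (h_weingarten : ∀ (X Y : VFM) (η : W), (∀ Z : VFM, gN η (incl Z) = 0) →
        gN (nablaN X η) (incl Y) = - gN (incl (A η X)) (incl Y))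
    -- `M` is `n`-dimensional, with orthonormal frame `{e_i}` of signs `ε_i = ±1`
    (n : ℕ) (hn : 0 < n)
    (e : Fin n → VFM) (ε : Fin n → ℝ) (hε : ∀ i, ε i = 1 ∨ ε i = -1)
    (h_frame : ∀ i j, gN (incl (e i)) (incl (e j)) = fun _ => if i = j then ε i else 0)
    -- the mean curvature vector `H = (1/n) Σ_i ε_i h(e_i, e_i)`
    (H : W) (h_H : H = (n : ℝ)⁻¹ • ∑ i, ε i • h2 (e i) (e i))
    -- `M` is minimal
    (h_min : H = 0)
    -- the concurrent vector field `V` of `N`, with tangent part `V^T`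
    -- and normal part `V^⊥` along `M`
    (V : W) (VT : VFM) (Vperp : W)
    (h_decomp : V = incl VT + Vperp)
    (h_perp : ∀ Z : VFM, gN Vperp (incl Z) = 0)
    (h_conc : ∀ X : VFM, nablaN X V = incl X)
    -- `(M, g, V^T, φ)` is a conformal soliton: `φ g = (1/2) L_{V^T} g`
    (φ : M → ℝ)
    (h_sol : ∀ X Y : VFM, φ * gN (incl X) (incl Y)
        = (2 : ℝ)⁻¹ • (D VT (gN (incl X) (incl Y))
            - gN (incl (bracket VT X)) (incl Y) - gN (incl X) (incl (bracket VT Y)))) :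
    -- conclusion: `φ ≡ 1`
    ∀ p : M, φ p = 1 := by

  -- auxiliary bilinearity facts about `gN`
  have gN_addr : ∀ X Y Z : W, gN X (Y + Z) = gN X Y + gN X Z := by
    intro X Y Z
    rw [hgN_symm, hgN_addl, hgN_symm Y, hgN_symm Z]
  have gN_smulr : ∀ (c : ℝ) (X Y : W), gN X (c • Y) = c • gN X Y := by
    intro c X Y
    rw [hgN_symm, hgN_smull, hgN_symm]
  have gN_zerol : ∀ Y : W, gN 0 Y = 0 := by
    intro Y
    have h := hgN_smull 0 0 Y
    simpa using h
  have gN_zeror : ∀ Y : W, gN Y 0 = 0 := by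
    intro Y
    rw [hgN_symm]; exact gN_zerol Y
  have gN_subl : ∀ X Y Z : W, gN (X - Y) Z = gN X Z - gN Y Z := by
    intro X Y Z
    rw [sub_eq_add_neg, ← neg_one_smul ℝ Y, hgN_addl, hgN_smull]
    funext p
    simp
    ring
  have gN_subr : ∀ X Y Z : W, gN X (Y - Z) = gN X Y - gN X Z := by
    intro X Y Z
    rw [hgN_symm, gN_subl, hgN_symm Y X, hgN_symm Z X]
  -- facts about V and its decomposition
  have hVTh : ∀ X Y : VFM, gN (incl VT) (h2 X Y) = 0 := by
    intro X Y
    rw [hgN_symm]; exact h_normal X Y VT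
  have hVe : ∀ Z : VFM, gN V (incl Z) = gN (incl VT) (incl Z) := by
    intro Z
    rw [h_decomp, hgN_addl, h_perp, add_zero]
  have hVh : ∀ X Y : VFM, gN V (h2 X Y) = gN Vperp (h2 X Y) := by
    intro X Y
    rw [h_decomp, hgN_addl, hVTh, zero_add]
  -- the key identity: g(∇_X V^T, Y) = g(X, Y) + g̃(V⊥, h(X,Y))
  have key : ∀ X Y : VFM, gN (incl (nabla X VT)) (incl Y)
      = gN (incl X) (incl Y) + gN Vperp (h2 X Y) := by
    intro X Y
    have e1 := h_compat X V (incl Y)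
    have e2 := h_compat X (incl VT) (incl Y)
    rw [hVe Y, h_conc, h_gauss, gN_addr, hVe, hVh] at e1
    rw [h_gauss, h_gauss, hgN_addl, gN_addr, h_normal, hVTh, add_zero, add_zero] at e2
    have e3 := e1.symm.trans e2
    funext p
    have h' := congrFun e3 p
    simp only [Pi.add_apply] at h' ⊢
    linarith
  -- rewrite the soliton equation
  have sol : ∀ X : VFM, φ * gN (incl X) (incl X)
      = gN (incl X) (incl X) + gN Vperp (h2 X X) := by
    intro X
    have hs := h_sol X X
    have hD : D VT (gN (incl X) (incl X))
        = gN (incl (nabla VT X)) (incl X) + gN (incl X) (incl (nabla VT X)) := by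
      have hc := h_compat VT (incl X) (incl X)
      rw [h_gauss, hgN_addl, h_normal, gN_addr, add_zero] at hc
      rw [hc, hgN_symm (incl X) (h2 VT X), h_normal, add_zero]
    have hb : gN (incl (bracket VT X)) (incl X)
        = gN (incl (nabla VT X)) (incl X) - gN (incl (nabla X VT)) (incl X) := by
      rw [← h_torsion, map_sub, gN_subl]
    have hb2 : gN (incl X) (incl (bracket VT X))
        = gN (incl X) (incl (nabla VT X)) - gN (incl X) (incl (nabla X VT)) := by
      rw [← h_torsion, map_sub, gN_subr]
    have hsy : gN (incl X) (incl (nabla X VT)) = gN (incl (nabla X VT)) (incl X) :=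
      hgN_symm _ _
    rw [hD, hb, hb2, hsy, key X X] at hs
    funext p
    have h' := congrFun hs p
    simp only [Pi.add_apply, Pi.sub_apply, Pi.mul_apply, Pi.smul_apply, smul_eq_mul] at h' ⊢
    linarith
  -- the sum Σ ε_i • h(e_i,e_i) vanishes
  have hnR : (n : ℝ) ≠ 0 := Nat.cast_ne_zero.mpr hn.ne'
  have hS : (∑ i, ε i • h2 (e i) (e i)) = 0 := by
    have h0 : (n : ℝ)⁻¹ • (∑ i, ε i • h2 (e i) (e i)) = 0 := by rw [← h_H, h_min]
    rcases smul_eq_zero.mp h0 with h | h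
    · exact absurd h (inv_ne_zero hnR)
    · exact h
  -- push gN Vperp through the sum
  have hsum : (∑ i, ε i • gN Vperp (h2 (e i) (e i))) = 0 := by
    let F : W →+ (M → ℝ) :=
      { toFun := gN Vperp
        map_zero' := gN_zeror Vperp
        map_add' := gN_addr Vperp }
    have h1 : gN Vperp (∑ i, ε i • h2 (e i) (e i))
        = ∑ i, gN Vperp (ε i • h2 (e i) (e i)) :=
      map_sum F (fun i => ε i • h2 (e i) (e i)) Finset.univ
    calc ∑ i, ε i • gN Vperp (h2 (e i) (e i))
        = ∑ i, gN Vperp (ε i • h2 (e i) (e i)) :=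
          Finset.sum_congr rfl fun i _ => (gN_smulr (ε i) Vperp _).symm
      _ = gN Vperp (∑ i, ε i • h2 (e i) (e i)) := h1.symm
      _ = 0 := by rw [hS]; exact gN_zeror Vperp
  -- conclude pointwise
  intro p
  have hpt : ∀ i : Fin n, φ p = 1 + ε i * gN Vperp (h2 (e i) (e i)) p := by
    intro i
    have h' := congrFun (sol (e i)) p
    rw [h_frame i i] at h'
    simp only [Pi.add_apply, Pi.mul_apply, eq_self_iff_true, if_true] at h'
    rcases hε i with h1 | h1 <;> rw [h1] at h' ⊢ <;> linarith
  have hsum' := congrFun hsum p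
  simp only [Finset.sum_apply, Pi.smul_apply, smul_eq_mul, Pi.zero_apply] at hsum'
  have htot : (n : ℝ) * φ p = (n : ℝ) := by
    have : ∑ _i : Fin n, φ p = ∑ i : Fin n, (1 + ε i * gN Vperp (h2 (e i) (e i)) p) :=
      Finset.sum_congr rfl fun i _ => hpt i
    simp only [Finset.sum_add_distrib, Finset.sum_const, Finset.card_univ, Fintype.card_fin,
      nsmul_eq_mul, mul_one] at this
    rw [hsum', add_zero] at this
    simpa [mul_comm] using this
  field_simp at htot
  exact htot
end
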